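/- Let q be an odd prime power and v ≥ 1. A Type-I duadic splitting of Z/2^vZ (given by some q-permutation ρ_{s,t}) exists if and only if 0 < v < 2·ν_2(q−1). Moreover, in that case there exists an integer u with max{0, v−ν_2(q−1)} ≤ u < min{v, ν_2(q−1)}, and the translation τ_{2^u}: i ↦ i+2^u gives a Type-I duadic splitting of Z/2^vZ. -/
import Mathlib

/-- bit `u` of a natural number depends only on its residue mod `2^(u+1)`. -/
private lemma bit_congr {u x y : ℕ} (h : x ≡ y [MOD 2 ^ (u + 1)]) :
    x / 2 ^ u % 2 = y / 2 ^ u % 2 := by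
  have h' : x % 2 ^ (u + 1) = y % 2 ^ (u + 1) := h
  have e : ∀ z : ℕ, z / 2 ^ u % 2 = z % 2 ^ (u + 1) / 2 ^ u := by
    intro z
    rw [pow_succ, Nat.mod_mul_right_div_self]
  rw [e, e, h']

private lemma odd_coprime_pow {z v : ℕ} (hz : Odd z) : Nat.Coprime z (2 ^ v) := by
  refine Nat.Coprime.pow_right v ?_
  have h2 : ¬ (2 ∣ z) := by
    have := Nat.odd_iff.mp hz
    omega
  exact (Nat.coprime_comm.mp ((Nat.prime_two.coprime_iff_not_dvd).mpr h2))

private lemma odd_int_isUnit {z : ℤ} {v : ℕ} (hz : Odd z) : IsUnit ((z : ℤ) : ZMod (2 ^ v)) := by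
  have h1 : IsUnit ((z.natAbs : ℕ) : ZMod (2 ^ v)) := by
    rw [ZMod.isUnit_iff_coprime]
    exact odd_coprime_pow (Int.natAbs_odd.mpr hz)
  rcases Int.natAbs_eq z with h | h
  · rw [h, Int.cast_natCast]; exact h1
  · rw [h, Int.cast_neg, Int.cast_natCast]; exact h1.neg

/-- The construction of the splitting from the translation `τ_{2^u}`. -/
private lemma dua_construct (q v u : ℕ) (hodd : Odd q) (huv : u < v)
    (hq1 : 2 ^ (u + 1) ∣ q - 1) (hq3 : 1 ≤ q) :
    ∃ P : Finset (ZMod (2 ^ v)),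
      P.image (fun i => (q : ZMod (2 ^ v)) * i) = P ∧
      P.image (fun i => i + (2 ^ u : ZMod (2 ^ v))) = Pᶜ := by
  haveI : NeZero (2 ^ v) := ⟨by positivity⟩
  have hdvd : 2 ^ (u + 1) ∣ 2 ^ v := pow_dvd_pow 2 (by omega)
  have hqmod : q ≡ 1 [MOD 2 ^ (u + 1)] := ((Nat.modEq_iff_dvd' hq3).mpr hq1).symm
  classical
  set P : Finset (ZMod (2 ^ v)) :=
    Finset.univ.filter (fun i : ZMod (2 ^ v) => i.val / 2 ^ u % 2 = 0) with hPdef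
  have hmemP : ∀ i : ZMod (2 ^ v), i ∈ P ↔ i.val / 2 ^ u % 2 = 0 := by
    intro i; simp [hPdef]
  refine ⟨P, ?_, ?_⟩
  · -- multiplicative invariance
    have hqu : IsUnit (q : ZMod (2 ^ v)) := by
      rw [ZMod.isUnit_iff_coprime]; exact odd_coprime_pow hodd
    have hinj : Function.Injective (fun i : ZMod (2 ^ v) => (q : ZMod (2 ^ v)) * i) := by
      intro x y hxy
      exact hqu.mul_left_cancel hxy
    have hkey : ∀ i : ZMod (2 ^ v),
        ((q : ZMod (2 ^ v)) * i).val / 2 ^ u % 2 = i.val / 2 ^ u % 2 := by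
      intro i
      have h1 : ((q : ZMod (2 ^ v)) * i).val ≡ (q % 2 ^ v) * i.val [MOD 2 ^ (u + 1)] := by
        rw [ZMod.val_mul, ZMod.val_natCast]
        exact (Nat.mod_modEq _ _).of_dvd hdvd
      have h2 : (q % 2 ^ v) * i.val ≡ q * i.val [MOD 2 ^ (u + 1)] :=
        ((Nat.mod_modEq q (2 ^ v)).of_dvd hdvd).mul_right _
      have h3 : q * i.val ≡ 1 * i.val [MOD 2 ^ (u + 1)] := hqmod.mul_right _
      have := bit_congr ((h1.trans h2).trans h3)
      simpa using this
    apply Finset.eq_of_subset_of_card_le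
    · intro j hj
      obtain ⟨i, hi, rfl⟩ := Finset.mem_image.mp hj
      rw [hmemP] at hi ⊢
      rw [hkey i]; exact hi
    · rw [Finset.card_image_of_injective _ hinj]
  · -- translation part
    have hcval : (2 ^ u : ZMod (2 ^ v)).val = 2 ^ u := by
      have hc : ((2 ^ u : ℕ) : ZMod (2 ^ v)) = (2 ^ u : ZMod (2 ^ v)) := by push_cast; ring
      rw [← hc, ZMod.val_natCast,
        Nat.mod_eq_of_lt (Nat.pow_lt_pow_right one_lt_two huv)]
    have hflip : ∀ i : ZMod (2 ^ v),
        (i + (2 ^ u : ZMod (2 ^ v))).val / 2 ^ u % 2 = (i.val / 2 ^ u % 2 + 1) % 2 := by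
      intro i
      have h1 : (i + (2 ^ u : ZMod (2 ^ v))).val ≡ i.val + 2 ^ u [MOD 2 ^ (u + 1)] := by
        rw [ZMod.val_add, hcval]
        exact (Nat.mod_modEq _ _).of_dvd hdvd
      rw [bit_congr h1, Nat.add_div_right _ (by positivity)]
      omega
    have hinj : Function.Injective (fun i : ZMod (2 ^ v) => i + (2 ^ u : ZMod (2 ^ v))) :=
      fun a b h => by simpa using h
    have sub1 : P.image (fun i => i + (2 ^ u : ZMod (2 ^ v))) ⊆ Pᶜ := by
      intro j hj
      obtain ⟨i, hi, rfl⟩ := Finset.mem_image.mp hj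
      rw [hmemP] at hi
      rw [Finset.mem_compl, hmemP, hflip i, hi]
      decide
    have sub2 : Pᶜ.image (fun i => i + (2 ^ u : ZMod (2 ^ v))) ⊆ P := by
      intro j hj
      obtain ⟨i, hi, rfl⟩ := Finset.mem_image.mp hj
      rw [Finset.mem_compl, hmemP] at hi
      rw [hmemP, hflip i]
      omega
    apply Finset.eq_of_subset_of_card_le sub1
    calc Pᶜ.card = (Pᶜ.image (fun i => i + (2 ^ u : ZMod (2 ^ v)))).card :=
          (Finset.card_image_of_injective _ hinj).symm
      _ ≤ P.card := Finset.card_le_card sub2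
      _ = (P.image (fun i => i + (2 ^ u : ZMod (2 ^ v)))).card :=
          (Finset.card_image_of_injective _ hinj).symm

theorem stmt16 (q : ℕ) (hq : ∃ p k : ℕ, p.Prime ∧ 0 < k ∧ q = p ^ k) (hodd : Odd q)
    (v : ℕ) (hv : 1 ≤ v) :
    ((∃ s t : ℤ, Odd s ∧ (q : ℤ) * t ≡ t [ZMOD (2 ^ v : ℕ)] ∧
        ∃ P : Finset (ZMod (2 ^ v)),
          P.image (fun i => (q : ZMod (2 ^ v)) * i) = P ∧
          P.image (fun i => (s : ZMod (2 ^ v)) * (i + (t : ZMod (2 ^ v)))) = Pᶜ) ↔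
      (0 < v ∧ v < 2 * padicValNat 2 (q - 1))) ∧
    ((0 < v ∧ v < 2 * padicValNat 2 (q - 1)) →
      ∃ u : ℕ, max 0 (v - padicValNat 2 (q - 1)) ≤ u ∧
        u < min v (padicValNat 2 (q - 1)) ∧
        (q : ℤ) * 2 ^ u ≡ 2 ^ u [ZMOD (2 ^ v : ℕ)] ∧
        ∃ P : Finset (ZMod (2 ^ v)),
          P.image (fun i => (q : ZMod (2 ^ v)) * i) = P ∧
          P.image (fun i => i + (2 ^ u : ZMod (2 ^ v))) = Pᶜ) := by
  haveI : NeZero (2 ^ v) := ⟨by positivity⟩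
  haveI : Fact (Nat.Prime 2) := ⟨Nat.prime_two⟩
  classical
  have hq2 : 2 ≤ q := by
    obtain ⟨p, k, hp, hk, rfl⟩ := hq
    calc 2 ≤ p := hp.two_le
      _ ≤ p ^ k := Nat.le_self_pow (by omega) p
  have hqm : q % 2 = 1 := Nat.odd_iff.mp hodd
  have hq3 : 3 ≤ q := by omega
  have hq1ne : q - 1 ≠ 0 := by omega
  set a := padicValNat 2 (q - 1) with ha
  have hadvd : 2 ^ a ∣ q - 1 := pow_padicValNat_dvd
  have ha1 : 1 ≤ a := by
    have h2 : 2 ^ 1 ∣ q - 1 := by rw [pow_one]; omega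
    rcases (padicValNat_dvd_iff 1 (q - 1)).mp h2 with h | h
    · omega
    · exact h
  -- Part 2: the construction
  have main2 : (0 < v ∧ v < 2 * a) →
      ∃ u : ℕ, max 0 (v - a) ≤ u ∧ u < min v a ∧
        (q : ℤ) * 2 ^ u ≡ 2 ^ u [ZMOD (2 ^ v : ℕ)] ∧
        ∃ P : Finset (ZMod (2 ^ v)),
          P.image (fun i => (q : ZMod (2 ^ v)) * i) = P ∧
          P.image (fun i => i + (2 ^ u : ZMod (2 ^ v))) = Pᶜ := by
    rintro ⟨hv0, hva⟩
    refine ⟨v - a, by omega, by omega, ?_, ?_⟩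
    · -- (q:ℤ) * 2^(v-a) ≡ 2^(v-a) [ZMOD 2^v]
      have h2 : (2 : ℤ) ^ a ∣ (q : ℤ) - 1 := by
        have h0 : ((q - 1 : ℕ) : ℤ) = (q : ℤ) - 1 := by omega
        rw [← h0]
        exact_mod_cast Int.natCast_dvd_natCast.mpr hadvd
      have hd : ((2 : ℤ)) ^ v ∣ ((q : ℤ) - 1) * 2 ^ (v - a) := by
        calc ((2 : ℤ)) ^ v ∣ (2 : ℤ) ^ (a + (v - a)) := pow_dvd_pow 2 (by omega)
          _ = 2 ^ a * 2 ^ (v - a) := by rw [pow_add]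
          _ ∣ ((q : ℤ) - 1) * 2 ^ (v - a) := mul_dvd_mul_right h2 _
      refine Int.modEq_iff_dvd.mpr ?_
      push_cast
      rw [show (2 : ℤ) ^ (v - a) - (q : ℤ) * 2 ^ (v - a) = -(((q : ℤ) - 1) * 2 ^ (v - a)) by ring]
      exact dvd_neg.mpr hd
    · refine dua_construct q v (v - a) hodd (by omega) ?_ (by omega)
      calc (2 : ℕ) ^ (v - a + 1) ∣ 2 ^ a := pow_dvd_pow 2 (by omega)
        _ ∣ q - 1 := hadvd
  refine ⟨⟨?_, ?_⟩, main2⟩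
  · -- forward: splitting → v < 2a
    rintro ⟨s, t, hs, ht, P, hP1, hP2⟩
    refine ⟨hv, ?_⟩
    by_contra hcon
    push_neg at hcon  -- 2a ≤ v
    -- basic units & injectivity
    have hqu : IsUnit (q : ZMod (2 ^ v)) := by
      rw [ZMod.isUnit_iff_coprime]; exact odd_coprime_pow hodd
    have hsu : IsUnit ((s : ℤ) : ZMod (2 ^ v)) := odd_int_isUnit hs
    have hμinj : Function.Injective (fun i : ZMod (2 ^ v) => (q : ZMod (2 ^ v)) * i) :=
      fun x y hxy => hqu.mul_left_cancel hxy
    have hρinj : Function.Injective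
        (fun i : ZMod (2 ^ v) => (s : ZMod (2 ^ v)) * (i + (t : ZMod (2 ^ v)))) := by
      intro x y hxy
      simp only at hxy
      have := hsu.mul_left_cancel hxy
      exact add_right_cancel this
    -- membership facts
    have hmem1 : ∀ i : ZMod (2 ^ v), i ∈ P ↔ (q : ZMod (2 ^ v)) * i ∈ P := by
      intro i
      constructor
      · intro hi
        rw [← hP1]
        exact Finset.mem_image_of_mem _ hi
      · intro hi
        rw [← hP1] at hi
        obtain ⟨j, hj, hji⟩ := Finset.mem_image.mp hi
        have : j = i := hμinj hji
        rwa [← this]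
    have hmem2a : ∀ i : ZMod (2 ^ v), i ∈ P →
        (s : ZMod (2 ^ v)) * (i + (t : ZMod (2 ^ v))) ∉ P := by
      intro i hi
      have : (s : ZMod (2 ^ v)) * (i + (t : ZMod (2 ^ v))) ∈ Pᶜ := by
        rw [← hP2]; exact Finset.mem_image_of_mem _ hi
      simpa [Finset.mem_compl] using this
    have hmem2b : ∀ i : ZMod (2 ^ v),
        (s : ZMod (2 ^ v)) * (i + (t : ZMod (2 ^ v))) ∉ P → i ∈ P := by
      intro i hni
      have hmem : (s : ZMod (2 ^ v)) * (i + (t : ZMod (2 ^ v))) ∈ Pᶜ :=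
        Finset.mem_compl.mpr hni
      rw [← hP2] at hmem
      obtain ⟨j, hj, hji⟩ := Finset.mem_image.mp hmem
      have : j = i := hρinj hji
      rwa [← this]
    -- divisibility from ht
    have hdvdQT : ((2 : ℤ)) ^ v ∣ ((q : ℤ) - 1) * t := by
      have := Int.ModEq.dvd ht  -- ↑(2^v) ∣ t - q*t
      have h2 : ((2 : ℤ)) ^ v ∣ t - (q : ℤ) * t := by exact_mod_cast this
      rw [show ((q : ℤ) - 1) * t = -(t - (q : ℤ) * t) by ring]
      exact dvd_neg.mpr h2
    by_cases ht0 : ((2 : ℤ)) ^ v ∣ t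
    · -- t ≡ 0 : x = 0 is a fixed point of ρ
      have htz : ((t : ℤ) : ZMod (2 ^ v)) = 0 := by
        rw [ZMod.intCast_zmod_eq_zero_iff_dvd]
        exact_mod_cast ht0
      have hfix : (s : ZMod (2 ^ v)) * ((0 : ZMod (2 ^ v)) + (t : ZMod (2 ^ v)))
          = (0 : ZMod (2 ^ v)) := by rw [htz]; ring
      by_cases h0 : (0 : ZMod (2 ^ v)) ∈ P
      · exact (hmem2a 0 h0) (by rw [hfix]; exact h0)
      · exact h0 (hmem2b 0 (by rw [hfix]; exact h0))
    · -- t ≠ 0 mod 2^v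
      have htne : t ≠ 0 := by rintro rfl; exact ht0 (dvd_zero _)
      set m := t.natAbs with hm
      have hm0 : m ≠ 0 := by simpa [hm, Int.natAbs_eq_zero] using htne
      set e := padicValNat 2 m with he
      have he1 : 2 ^ e ∣ m := pow_padicValNat_dvd
      have he2 : ¬ 2 ^ (e + 1) ∣ m := pow_succ_padicValNat_not_dvd hm0
      have hev : e < v := by
        by_contra hle
        push_neg at hle
        apply ht0
        have h1 : (2 : ℕ) ^ v ∣ m := dvd_trans (pow_dvd_pow 2 hle) he1
        have h2 : ((2 : ℤ)) ^ v ∣ (m : ℤ) := by exact_mod_cast Int.natCast_dvd_natCast.mpr h1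
        exact Int.dvd_natAbs.mp h2
      have hva2 : v ≤ a + e := by
        have hX : (2 : ℕ) ^ v ∣ (q - 1) * m := by
          have h1 : ((2 : ℤ)) ^ v ∣ ((((q : ℤ) - 1) * t).natAbs : ℤ) :=
            Int.dvd_natAbs.mpr hdvdQT
          have h2 : (2 : ℕ) ^ v ∣ (((q : ℤ) - 1) * t).natAbs := by exact_mod_cast h1
          have h3 : (((q : ℤ) - 1) * t).natAbs = (q - 1) * m := by
            rw [Int.natAbs_mul]
            congr 1
            omega
          rwa [h3] at h2
        have hne : (q - 1) * m ≠ 0 := by positivity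
        rcases (padicValNat_dvd_iff v ((q - 1) * m)).mp hX with h | h
        · exact absurd h hne
        · rwa [padicValNat.mul hq1ne hm0] at h
      -- choose j ∈ {0,1}
      have hj : ¬ (2 : ℤ) ^ (e + 1) ∣ (s - 1) ∨ ¬ (2 : ℤ) ^ (e + 1) ∣ (s - (q : ℤ)) := by
        by_contra hc
        push_neg at hc
        obtain ⟨h1, h2⟩ := hc
        have h3 : (2 : ℤ) ^ (e + 1) ∣ ((q : ℤ) - 1) := by
          have := dvd_sub h1 h2
          rwa [show s - 1 - (s - (q : ℤ)) = (q : ℤ) - 1 by ring] at this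
        have h4 : (2 : ℕ) ^ (e + 1) ∣ q - 1 := by
          have h5 : ((2 : ℤ)) ^ (e + 1) ∣ ((((q : ℤ) - 1)).natAbs : ℤ) := Int.dvd_natAbs.mpr h3
          have h6 : (2 : ℕ) ^ (e + 1) ∣ (((q : ℤ) - 1)).natAbs := by exact_mod_cast h5
          have h7 : (((q : ℤ) - 1)).natAbs = q - 1 := by omega
          rwa [h7] at h6
        have h8 : e + 1 ≤ a := by
          rcases (padicValNat_dvd_iff (e + 1) (q - 1)).mp h4 with h | h
          · exact absurd h hq1ne
          · exact h
        omega
      -- solve (Q - s) x = s t in ZMod 2^v whenever 2^(e+1) ∤ (s - Q)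
      have hsolve : ∀ Q : ℤ, ¬ (2 : ℤ) ^ (e + 1) ∣ (s - Q) →
          ∃ x : ZMod (2 ^ v), (s : ZMod (2 ^ v)) * (x + (t : ZMod (2 ^ v)))
            = ((Q : ℤ) : ZMod (2 ^ v)) * x := by
        intro Q hQ
        set B : ℤ := Q - s with hB
        have hBne : B ≠ 0 := by
          intro h
          exact hQ (by rw [show s - Q = -B by rw [hB]; ring, h, neg_zero]; exact dvd_zero _)
        set b := B.natAbs with hb
        have hbne : b ≠ 0 := by simpa [hb, Int.natAbs_eq_zero] using hBne
        set w := padicValNat 2 b with hw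
        have hw1 : 2 ^ w ∣ b := pow_padicValNat_dvd
        have hw2 : ¬ 2 ^ (w + 1) ∣ b := pow_succ_padicValNat_not_dvd hbne
        have hwe : w ≤ e := by
          by_contra hlt
          push_neg at hlt
          apply hQ
          have h1 : (2 : ℕ) ^ (e + 1) ∣ b := dvd_trans (pow_dvd_pow 2 hlt) hw1
          have h2 : ((2 : ℤ)) ^ (e + 1) ∣ (b : ℤ) := by exact_mod_cast Int.natCast_dvd_natCast.mpr h1
          have h3 : ((2 : ℤ)) ^ (e + 1) ∣ B := Int.dvd_natAbs.mp h2
          rw [show s - Q = -B by rw [hB]; ring]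
          exact dvd_neg.mpr h3
        have hBd : (2 : ℤ) ^ w ∣ B := by
          have h2 : ((2 : ℤ)) ^ w ∣ (b : ℤ) := by exact_mod_cast Int.natCast_dvd_natCast.mpr hw1
          exact Int.dvd_natAbs.mp h2
        obtain ⟨B', hB'⟩ := hBd
        have hB'odd : Odd B' := by
          rcases Int.even_or_odd B' with he' | ho
          · exfalso
            apply hw2
            obtain ⟨k, hk⟩ := he'
            have h1 : (2 : ℤ) ^ (w + 1) ∣ B := ⟨k, by rw [hB', hk]; ring⟩
            have h2 : ((2 : ℤ)) ^ (w + 1) ∣ (b : ℤ) := Int.dvd_natAbs.mpr h1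
            exact_mod_cast h2
          · exact ho
        have htw : (2 : ℤ) ^ w ∣ t := by
          have h1 : (2 : ℕ) ^ w ∣ m := dvd_trans (pow_dvd_pow 2 hwe) he1
          have h2 : ((2 : ℤ)) ^ w ∣ (m : ℤ) := by exact_mod_cast Int.natCast_dvd_natCast.mpr h1
          exact Int.dvd_natAbs.mp h2
        obtain ⟨t', ht'⟩ := htw
        have hB'u : IsUnit ((B' : ℤ) : ZMod (2 ^ v)) := odd_int_isUnit hB'odd
        refine ⟨((s * t' : ℤ) : ZMod (2 ^ v)) * (((B' : ℤ) : ZMod (2 ^ v)))⁻¹, ?_⟩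
        have hx : ((B : ℤ) : ZMod (2 ^ v)) *
            (((s * t' : ℤ) : ZMod (2 ^ v)) * (((B' : ℤ) : ZMod (2 ^ v)))⁻¹)
            = ((s * t : ℤ) : ZMod (2 ^ v)) := by
          rw [hB']
          push_cast
          calc ((2 : ZMod (2 ^ v)) ^ w * (B' : ZMod (2 ^ v))) *
                (((s : ZMod (2 ^ v)) * (t' : ZMod (2 ^ v))) * ((B' : ZMod (2 ^ v)))⁻¹)
              = ((2 : ZMod (2 ^ v)) ^ w * ((s : ZMod (2 ^ v)) * (t' : ZMod (2 ^ v)))) *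
                ((B' : ZMod (2 ^ v)) * ((B' : ZMod (2 ^ v)))⁻¹) := by ring
            _ = (2 : ZMod (2 ^ v)) ^ w * ((s : ZMod (2 ^ v)) * (t' : ZMod (2 ^ v))) := by
                rw [ZMod.mul_inv_of_unit _ hB'u, mul_one]
            _ = (s : ZMod (2 ^ v)) * (t : ZMod (2 ^ v)) := by
                have : ((t : ℤ) : ZMod (2 ^ v)) =
                    (2 : ZMod (2 ^ v)) ^ w * ((t' : ℤ) : ZMod (2 ^ v)) := by
                  rw [ht']; push_cast; ring
                rw [this]; ring
        rw [hB] at hx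
        push_cast at hx ⊢
        linear_combination -hx
      -- conclude
      rcases hj with hj | hj
      · obtain ⟨x, hx⟩ := hsolve 1 hj
        rw [Int.cast_one, one_mul] at hx
        by_cases hxP : x ∈ P
        · exact (hmem2a x hxP) (by rw [hx]; exact hxP)
        · exact hxP (hmem2b x (by rw [hx]; exact hxP))
      · obtain ⟨x, hx⟩ := hsolve (q : ℤ) hj
        rw [Int.cast_natCast] at hx
        by_cases hxP : x ∈ P
        · have h1 : (q : ZMod (2 ^ v)) * x ∈ P := (hmem1 x).mp hxP
          exact (hmem2a x hxP) (by rw [hx]; exact h1)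
        · have h1 : (q : ZMod (2 ^ v)) * x ∈ P := by
            by_contra h2
            exact hxP (hmem2b x (by rw [hx]; exact h2))
          exact hxP ((hmem1 x).mpr h1)
  · -- backward: condition → splitting (via main2 with s = 1, t = 2^u)
    rintro ⟨hv0, hva⟩
    obtain ⟨u, hu1, hu2, hcong, P, hP1, hP2⟩ := main2 ⟨hv0, hva⟩
    refine ⟨1, 2 ^ u, odd_one, by simpa using hcong, P, hP1, ?_⟩
    have hfun : (fun i : ZMod (2 ^ v) => ((1 : ℤ) : ZMod (2 ^ v)) *
        (i + (((2 : ℤ) ^ u : ℤ) : ZMod (2 ^ v)))) =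
        (fun i : ZMod (2 ^ v) => i + (2 ^ u : ZMod (2 ^ v))) := by
      funext i
      push_cast
      ring
    rw [hfun]
    exact hP2
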